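/- arXiv:0907.0268 — 5 statements merged into one kernel-verified Lean document; each statement's English description precedes it below -/
import Mathlib

section
/- An element m = (m₁,m₂,m₃,m₄) ∈ ℤ⁴ satisfies m₁ ≥ 0, m₂ ≥ 0, m₃ ≥ 0, −m₁+m₂+m₃ ≥ 0, and m₁−m₂−m₃+m₄ = 0 if and only if m is a ℕ-linear combination of the four vectors (1,1,0,0), (0,0,1,1), (1,0,1,0), (0,1,0,1). -/
/-- An integral vector `m ∈ ℤ⁴` lies in the dual cone `σ^∨ ∩ M` of the conifold cone
iff it is an `ℕ`-linear combination of `e₁*+e₂*, e₃*+e₄*, e₁*+e₃*, e₂*+e₄*`. -/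
theorem conifold_dual_cone_generators (m : Fin 4 → ℤ) :
    (0 ≤ m 0 ∧ 0 ≤ m 1 ∧ 0 ≤ m 2 ∧ 0 ≤ -m 0 + m 1 + m 2 ∧
      m 0 - m 1 - m 2 + m 3 = 0) ↔
    ∃ k₁ k₂ k₃ k₄ : ℕ,
      m = k₁ • (![1, 1, 0, 0] : Fin 4 → ℤ) + k₂ • (![0, 0, 1, 1] : Fin 4 → ℤ) +
          k₃ • (![1, 0, 1, 0] : Fin 4 → ℤ) + k₄ • (![0, 1, 0, 1] : Fin 4 → ℤ) := by
  constructor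
  · rintro ⟨h0, h1, h2, h3, h4⟩
    refine ⟨(m 0 - min (m 0) (m 2)).toNat, (m 2 - min (m 0) (m 2)).toNat,
      (min (m 0) (m 2)).toNat, (m 1 - m 0 + min (m 0) (m 2)).toNat, ?_⟩
    funext i
    fin_cases i <;> simp [Pi.add_apply, Pi.smul_apply] <;> omega
  · rintro ⟨k₁, k₂, k₃, k₄, rfl⟩
    refine ⟨?_, ?_, ?_, ?_, ?_⟩ <;> simp [Pi.add_apply, Pi.smul_apply] <;> omega
end

section
/- Let Λ_c be the conifold algebra and let T : ℂ[z₁,z₂,z₃,z₄] → Λ_c be the ℂ-algebra homomorphism with T(z₁) = ξ₁², T(z₂) = ξ₂², T(z₃) = ½(ξ₁ξ₂+ξ₂ξ₁) + ½(ξ₁ξ₂−ξ₂ξ₁)ξ₃, T(z₄) = ½(ξ₁ξ₂+ξ₂ξ₁) − ½(ξ₁ξ₂−ξ₂ξ₁)ξ₃. Then the kernel of T is exactly the principal ideal generated by z₁z₂ − z₃z₄; hence T induces an injective ℂ-algebra homomorphism τ^♯ from the conifold ring ℂ[z₁,z₂,z₃,z₄]/(z₁z₂−z₃z₄) into Λ_c.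 -/
open MvPolynomial in
/-- Generators of the relations of the conifold algebra `Λ_c`:
`ξ₁²ξ₂ = ξ₂ξ₁²`, `ξ₁ξ₂² = ξ₂²ξ₁`, `ξ₁ξ₃ = −ξ₃ξ₁`, `ξ₂ξ₃ = −ξ₃ξ₂`, `ξ₃² = 1`. -/
inductive ConifoldRel : FreeAlgebra ℂ (Fin 3) → FreeAlgebra ℂ (Fin 3) → Prop
  | r1 : ConifoldRel ((FreeAlgebra.ι ℂ (0 : Fin 3)) ^ 2 * FreeAlgebra.ι ℂ (1 : Fin 3))
      (FreeAlgebra.ι ℂ (1 : Fin 3) * (FreeAlgebra.ι ℂ (0 : Fin 3)) ^ 2)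
  | r2 : ConifoldRel (FreeAlgebra.ι ℂ (0 : Fin 3) * (FreeAlgebra.ι ℂ (1 : Fin 3)) ^ 2)
      ((FreeAlgebra.ι ℂ (1 : Fin 3)) ^ 2 * FreeAlgebra.ι ℂ (0 : Fin 3))
  | r3 : ConifoldRel (FreeAlgebra.ι ℂ (0 : Fin 3) * FreeAlgebra.ι ℂ (2 : Fin 3))
      (-(FreeAlgebra.ι ℂ (2 : Fin 3) * FreeAlgebra.ι ℂ (0 : Fin 3)))
  | r4 : ConifoldRel (FreeAlgebra.ι ℂ (1 : Fin 3) * FreeAlgebra.ι ℂ (2 : Fin 3))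
      (-(FreeAlgebra.ι ℂ (2 : Fin 3) * FreeAlgebra.ι ℂ (1 : Fin 3)))
  | r5 : ConifoldRel ((FreeAlgebra.ι ℂ (2 : Fin 3)) ^ 2) 1

/-- The conifold algebra `Λ_c = ℂ⟨ξ₁,ξ₂,ξ₃⟩/(relations)`. -/
abbrev ConifoldAlgebra : Type := RingQuot ConifoldRel

/-- The generators `ξ₁, ξ₂, ξ₃` of the conifold algebra. -/
noncomputable def cxi (i : Fin 3) : ConifoldAlgebra :=
  RingQuot.mkAlgHom ℂ ConifoldRel (FreeAlgebra.ι ℂ i)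

/-- The image `τ^♯(z₃) = ½(ξ₁ξ₂+ξ₂ξ₁) + ½(ξ₁ξ₂−ξ₂ξ₁)ξ₃` in `Λ_c`. -/
noncomputable def tauZ : Fin 4 → ConifoldAlgebra :=
  ![cxi 0 ^ 2, cxi 1 ^ 2,
    (1 / 2 : ℂ) • (cxi 0 * cxi 1 + cxi 1 * cxi 0) +
      (1 / 2 : ℂ) • ((cxi 0 * cxi 1 - cxi 1 * cxi 0) * cxi 2),
    (1 / 2 : ℂ) • (cxi 0 * cxi 1 + cxi 1 * cxi 0) -
      (1 / 2 : ℂ) • ((cxi 0 * cxi 1 - cxi 1 * cxi 0) * cxi 2)]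

/-!
Send `ξ₁, ξ₂, ξ₃` to the `2 × 2` matrices `[[0, a], [b, 0]]`, `[[0, c], [d, 0]]`, `diag(1, -1)` over
`ℂ[a, b, c, d]`. This is a representation of `Λ_c` in which `T(z₁), …, T(z₄)` become the scalars
`ab, cd, ad, bc`, so the kernel of `T` lies in the kernel of the monomial map
`σ : z₁ ↦ ab, z₂ ↦ cd, z₃ ↦ ad, z₄ ↦ bc`. Modulo `z₁z₂ - z₃z₄` every polynomial is congruent to one
in which no monomial contains both `z₁` and `z₂`, and on such monomials the exponent map of `σ` is injective, so
`ker σ = (z₁z₂ - z₃z₄)`. Conversely `T(z₁)T(z₂) = T(z₃)T(z₄)` follows from the defining relations: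
`ξ₃` commutes with `ξ₁ξ₂` and `ξ₂ξ₁`, and `ξ₁ξ₂ · ξ₂ξ₁ = ξ₂ξ₁ · ξ₁ξ₂ = ξ₁²ξ₂²`.
-/

open MvPolynomial

section Noncomm

variable {A : Type*} [Ring A]

theorem commute_mul_of_mul_eq_neg {a b c : A} (ha : a * c = -(c * a)) (hb : b * c = -(c * b)) :
    Commute (a * b) c := by
  rw [Commute, SemiconjBy, mul_assoc, hb, mul_neg, ← mul_assoc, ha, neg_mul, neg_neg, mul_assoc]

theorem add_mul_mul_sub_mul_of_sq_eq_one {u v c : A} (huv : Commute u v) (huc : Commute u c)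
    (hvc : Commute v c) (hc : c ^ 2 = 1) : (u + v * c) * (u - v * c) = u ^ 2 - v ^ 2 := by
  rw [← (huv.mul_right huc).sq_sub_sq, hvc.mul_pow, hc, mul_one]

theorem sq_mul_sq_eq_of_conifold_rel {K : Type*} [Field K] [NeZero (2 : K)] [Algebra K A]
    {a b c : A} (h₁ : Commute (a ^ 2) b) (h₂ : Commute a (b ^ 2)) (h₃ : a * c = -(c * a))
    (h₄ : b * c = -(c * b)) (h₅ : c ^ 2 = 1) :
    a ^ 2 * b ^ 2 = ((1 / 2 : K) • (a * b + b * a) + (1 / 2 : K) • ((a * b - b * a) * c)) *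
      ((1 / 2 : K) • (a * b + b * a) - (1 / 2 : K) • ((a * b - b * a) * c)) := by
  have hab : a * b * (b * a) = a ^ 2 * b ^ 2 :=
    calc a * b * (b * a) = a * b ^ 2 * a := by noncomm_ring
      _ = b ^ 2 * a ^ 2 := by rw [h₂.eq, mul_assoc, ← pow_two]
      _ = a ^ 2 * b ^ 2 := (h₁.pow_right 2).eq.symm
  have hba : b * a * (a * b) = a ^ 2 * b ^ 2 :=
    calc b * a * (a * b) = b * a ^ 2 * b := by noncomm_ring
      _ = a ^ 2 * b ^ 2 := by rw [← h₁.eq, mul_assoc, ← pow_two]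
  have hcomm : Commute (a * b) (b * a) := hab.trans hba.symm
  have hsq : (a * b + b * a) ^ 2 - (a * b - b * a) ^ 2 = (2 : K) • (2 : K) • (a ^ 2 * b ^ 2) :=
    calc (a * b + b * a) ^ 2 - (a * b - b * a) ^ 2
          = 2 • (a * b * (b * a) + b * a * (a * b)) := by noncomm_ring
      _ = _ := by rw [hab, hba, two_nsmul, two_smul K, two_smul K]
  have hc₁ := commute_mul_of_mul_eq_neg h₃ h₄
  have hc₂ := commute_mul_of_mul_eq_neg h₄ h₃
  have huv : Commute (a * b + b * a) (a * b - b * a) :=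
    ((Commute.refl _).add_left hcomm.symm).sub_right (hcomm.add_left (Commute.refl _))
  rw [← smul_add, ← smul_sub, smul_mul_smul_comm,
    add_mul_mul_sub_mul_of_sq_eq_one huv (hc₁.add_left hc₂) (hc₁.sub_left hc₂) h₅, hsq,
    ← smul_smul, one_div, inv_smul_smul₀ two_ne_zero, inv_smul_smul₀ two_ne_zero]

end Noncomm

namespace Conifold

section Param

variable (R : Type*) [CommRing R]

/-- The exponent map of the monomial substitution `z₁ ↦ ab, z₂ ↦ cd, z₃ ↦ ad, z₄ ↦ bc`. -/
noncomputable def paramExp : (Fin 4 →₀ ℕ) →+ (Fin 4 →₀ ℕ) :=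
  (Finsupp.linearCombination ℕ ![Finsupp.single 0 1 + Finsupp.single 1 1,
    Finsupp.single 2 1 + Finsupp.single 3 1, Finsupp.single 0 1 + Finsupp.single 3 1,
    Finsupp.single 1 1 + Finsupp.single 2 1]).toAddMonoidHom

noncomputable def param : MvPolynomial (Fin 4) R →ₐ[R] MvPolynomial (Fin 4) R :=
  AddMonoidAlgebra.mapDomainAlgHom R R paramExp

/-- The standard monomials for the leading term `z₁z₂` of `z₁z₂ - z₃z₄`. -/
def standardExps : Set (Fin 4 →₀ ℕ) := {u | u 0 = 0 ∨ u 1 = 0}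

noncomputable def ideal : Ideal (MvPolynomial (Fin 4) R) := Ideal.span {X 0 * X 1 - X 2 * X 3}

variable {R}

theorem paramExp_apply (u : Fin 4 →₀ ℕ) :
    paramExp u = Finsupp.equivFunOnFinite.symm ![u 0 + u 2, u 0 + u 3, u 1 + u 3, u 1 + u 2] := by
  ext j
  fin_cases j <;>
    simp [paramExp, Finsupp.linearCombination_apply, Finsupp.sum_fintype, Fin.sum_univ_four]

theorem paramExp_injOn : Set.InjOn paramExp standardExps := by
  intro u hu v hv huv
  simp only [paramExp_apply, EmbeddingLike.apply_eq_iff_eq] at huv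
  have h₀ := congrFun huv 0
  have h₁ := congrFun huv 1
  have h₂ := congrFun huv 2
  have h₃ := congrFun huv 3
  simp only [Matrix.cons_val] at h₀ h₁ h₂ h₃
  simp only [standardExps, Set.mem_ofPred_eq] at hu hv
  ext i
  fin_cases i <;> simp <;> omega

theorem param_monomial (u : Fin 4 →₀ ℕ) (r : R) :
    param R (monomial u r) = monomial (paramExp u) r := by
  simp [param, MvPolynomial, monomial]

theorem param_X (i : Fin 4) :
    param R (X i) = ![X 0 * X 1, X 2 * X 3, X 0 * X 3, X 1 * X 2] i := by
  fin_cases i <;> simp [X, param_monomial, monomial_mul, paramExp]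

theorem coeff_param_paramExp {p : MvPolynomial (Fin 4) R}
    (hp : p ∈ restrictSupport R standardExps) {u : Fin 4 →₀ ℕ} (hu : u ∈ standardExps) :
    coeff (paramExp u) (param R p) = coeff u p := by
  simp only [param, coeff, AddMonoidAlgebra.mapDomainAlgHom_apply,
    AddMonoidAlgebra.coeff_mapDomain]
  exact Finsupp.mapDomain_apply' _ _ hp paramExp_injOn hu

theorem param_injOn : Set.InjOn (param R) (restrictSupport R standardExps) := by
  intro p hp q hq hpq
  ext u
  by_cases hu : u ∈ standardExps
  · rw [← coeff_param_paramExp hp hu, ← coeff_param_paramExp hq hu, hpq]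
  · rw [notMem_support_iff.mp fun h => hu ((mem_restrictSupport_iff R).mp hp h),
      notMem_support_iff.mp fun h => hu ((mem_restrictSupport_iff R).mp hq h)]

theorem monomial_add_single_add_single (w : Fin 4 →₀ ℕ) (r : R) :
    monomial (w + Finsupp.single 0 1 + Finsupp.single 1 1) r =
      (X 0 * X 1 - X 2 * X 3) * monomial w r +
        monomial (w + Finsupp.single 2 1 + Finsupp.single 3 1) r := by
  simp only [X, sub_mul, monomial_mul, one_mul]
  abel_nf

theorem monomial_mem_ideal_sup_restrictSupport (u : Fin 4 →₀ ℕ) (r : R) :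
    monomial u r ∈ (ideal R).restrictScalars R ⊔ restrictSupport R standardExps := by
  induction hn : u 0 generalizing u with
  | zero => exact Submodule.mem_sup_right (by simp [standardExps, hn])
  | succ n ih =>
    by_cases h₁ : u 1 = 0
    · exact Submodule.mem_sup_right (by simp [standardExps, h₁])
    obtain ⟨w, rfl⟩ : ∃ w, u = w + Finsupp.single 0 1 + Finsupp.single 1 1 :=
      ⟨u - Finsupp.single 0 1 - Finsupp.single 1 1, by ext i; fin_cases i <;> simp <;> omega⟩
    rw [monomial_add_single_add_single]
    refine Submodule.add_mem _ (Submodule.mem_sup_left ?_) (ih _ (by simpa using hn))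
    exact Ideal.mul_mem_right _ _ (Ideal.subset_span rfl)

theorem ideal_sup_restrictSupport :
    (ideal R).restrictScalars R ⊔ restrictSupport R standardExps = ⊤ := by
  refine Submodule.eq_top_iff'.mpr fun p => ?_
  induction p using MvPolynomial.induction_on' with
  | monomial u r => exact monomial_mem_ideal_sup_restrictSupport u r
  | add p q hp hq => exact Submodule.add_mem _ hp hq

theorem ideal_le_ker_param : ideal R ≤ RingHom.ker (param R) := by
  rw [ideal, Ideal.span_singleton_le_iff_mem, RingHom.mem_ker]
  simp only [map_sub, map_mul, param_X, Matrix.cons_val]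
  ring

theorem ker_param : RingHom.ker (param R) = ideal R := by
  refine le_antisymm (fun p hp => ?_) ideal_le_ker_param
  obtain ⟨y, hy, z, hz, rfl⟩ :=
    Submodule.mem_sup.mp (ideal_sup_restrictSupport.ge (Submodule.mem_top (x := p)))
  have hz₀ : param R z = param R 0 := by
    rwa [RingHom.mem_ker, map_add, ideal_le_ker_param hy, zero_add, ← map_zero (param R)] at hp
  rw [param_injOn hz (Submodule.zero_mem _) hz₀, add_zero]
  exact hy

end Param

noncomputable def matrixGen : Fin 3 → Matrix (Fin 2) (Fin 2) (MvPolynomial (Fin 4) ℂ) :=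
  ![!![0, X 0; X 1, 0], !![0, X 2; X 3, 0], !![1, 0; 0, -1]]

theorem lift_matrixGen_rel ⦃x y : FreeAlgebra ℂ (Fin 3)⦄ (h : ConifoldRel x y) :
    FreeAlgebra.lift ℂ matrixGen x = FreeAlgebra.lift ℂ matrixGen y := by
  cases h <;> ext k l : 1 <;> fin_cases k <;> fin_cases l <;>
    simp [matrixGen, pow_two, Matrix.mul_apply, mul_comm]

noncomputable def matrixRep :
    ConifoldAlgebra →ₐ[ℂ] Matrix (Fin 2) (Fin 2) (MvPolynomial (Fin 4) ℂ) :=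
  RingQuot.liftAlgHom ℂ ⟨FreeAlgebra.lift ℂ matrixGen, lift_matrixGen_rel⟩

theorem matrixRep_cxi (i : Fin 3) : matrixRep (cxi i) = matrixGen i := by
  rw [cxi, matrixRep, RingQuot.liftAlgHom_mkAlgHom_apply, FreeAlgebra.lift_ι_apply]

theorem matrixRep_tauZ (i : Fin 4) :
    matrixRep (tauZ i) = Matrix.scalar (Fin 2) (param ℂ (X i)) := by
  rw [param_X]
  fin_cases i <;> ext k l : 1 <;> fin_cases k <;> fin_cases l <;>
    simp [tauZ, matrixRep_cxi, matrixGen, pow_two, Matrix.mul_apply, mul_comm] <;> module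

theorem tauZ_mul_tauZ : tauZ 0 * tauZ 1 = tauZ 2 * tauZ 3 := by
  have h₁ := RingQuot.mkAlgHom_rel ℂ ConifoldRel.r1
  have h₂ := RingQuot.mkAlgHom_rel ℂ ConifoldRel.r2
  have h₃ := RingQuot.mkAlgHom_rel ℂ ConifoldRel.r3
  have h₄ := RingQuot.mkAlgHom_rel ℂ ConifoldRel.r4
  have h₅ := RingQuot.mkAlgHom_rel ℂ ConifoldRel.r5
  simp only [map_mul, map_pow, map_neg, map_one] at h₁ h₂ h₃ h₄ h₅
  exact sq_mul_sq_eq_of_conifold_rel h₁ h₂ h₃ h₄ h₅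

variable {T : MvPolynomial (Fin 4) ℂ →ₐ[ℂ] ConifoldAlgebra} (hT : ∀ i, T (X i) = tauZ i)
include hT

theorem ker_le_ker_param : RingHom.ker T ≤ RingHom.ker (param ℂ) := by
  have hcomp : matrixRep.comp T = (Matrix.scalarAlgHom (Fin 2) ℂ).comp (param ℂ) :=
    algHom_ext fun i => by simp [hT, matrixRep_tauZ]
  intro p hp
  refine (Matrix.scalar_inj (n := Fin 2)).mp ?_
  rw [map_zero, ← Matrix.scalarAlgHom_apply (Fin 2) ℂ, ← AlgHom.comp_apply, ← hcomp,
    AlgHom.comp_apply, RingHom.mem_ker.mp hp, map_zero]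

theorem ideal_le_ker : ideal ℂ ≤ RingHom.ker T := by
  rw [ideal, Ideal.span_singleton_le_iff_mem, RingHom.mem_ker]
  simp only [map_sub, map_mul, hT, tauZ_mul_tauZ, sub_self]

end Conifold

open MvPolynomial in
/-- The homomorphism `T : ℂ[z₁,z₂,z₃,z₄] → Λ_c` with `T(z₁)=ξ₁²`, `T(z₂)=ξ₂²`,
`T(z₃)=½(ξ₁ξ₂+ξ₂ξ₁)+½(ξ₁ξ₂−ξ₂ξ₁)ξ₃`, `T(z₄)=½(ξ₁ξ₂+ξ₂ξ₁)−½(ξ₁ξ₂−ξ₂ξ₁)ξ₃` has kernel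
exactly `(z₁z₂ − z₃z₄)`; hence it induces an injective homomorphism `τ^♯` from the
conifold ring into `Λ_c`. -/
theorem conifold_ring_embeds_in_conifold_algebra
    (T : MvPolynomial (Fin 4) ℂ →ₐ[ℂ] ConifoldAlgebra)
    (hT : ∀ i : Fin 4, T (X i) = tauZ i) :
    RingHom.ker T =
      Ideal.span {(X 0 * X 1 - X 2 * X 3 : MvPolynomial (Fin 4) ℂ)} ∧
    ∃ τ : (MvPolynomial (Fin 4) ℂ ⧸
        Ideal.span {(X 0 * X 1 - X 2 * X 3 : MvPolynomial (Fin 4) ℂ)}) →ₐ[ℂ]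
        ConifoldAlgebra,
      Function.Injective τ ∧
      ∀ q : MvPolynomial (Fin 4) ℂ,
        τ (Ideal.Quotient.mk
          (Ideal.span {(X 0 * X 1 - X 2 * X 3 : MvPolynomial (Fin 4) ℂ)}) q) = T q := by
  have hker : RingHom.ker T = Conifold.ideal ℂ :=
    le_antisymm ((Conifold.ker_le_ker_param hT).trans Conifold.ker_param.le)
      (Conifold.ideal_le_ker hT)
  have hI : ∀ a ∈ Conifold.ideal ℂ, T a = 0 := fun _ ha => hker.ge ha
  exact ⟨hker, Ideal.Quotient.liftₐ _ T hI, (Ideal.injective_lift_iff hI).mpr hker, fun _ => rfl⟩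
end

section
/- Let Λ_c be the conifold algebra and let ρ : Λ_c → M₂(ℂ) be any ℂ-algebra homomorphism. Then there exists g ∈ GL₂(ℂ) such that the conjugated homomorphism ρ_g := g·ρ(−)·g⁻¹ satisfies exactly one of the following: (1) ρ_g(ξ₁) = ρ_g(ξ₂) = 0 and ρ_g(ξ₃) = Id; (2) ρ_g(ξ₁) = ρ_g(ξ₂) = 0 and ρ_g(ξ₃) = −Id; (3) ρ_g(ξ₃) = diag(1,−1) and there exist a₁, b₁, a₂, b₂ ∈ ℂ with ρ_g(ξ₁) = [[0,a₁],[b₁,0]] and ρ_g(ξ₂) = [[0,a₂],[b₂,0]]. -/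
section aux

/-- If a 2×2 complex matrix squares to 1, it is `1`, `-1`, or diagonalizable
to `diag(1,-1)` via an explicit invertible matrix `M` of eigenvectors. -/
lemma zmat_cases (Z : Matrix (Fin 2) (Fin 2) ℂ) (hZ : Z * Z = 1) :
    Z = 1 ∨ Z = -1 ∨
      ∃ M : Matrix (Fin 2) (Fin 2) ℂ, M.det ≠ 0 ∧ Z * M = M * !![1, 0; 0, -1] := by
  set a := Z 0 0 with ha
  set b := Z 0 1 with hb
  set c := Z 1 0 with hc
  set d := Z 1 1 with hd
  have hZe : Z = !![a, b; c, d] := by rw [ha, hb, hc, hd]; exact Matrix.etaExpand_eq Z |>.symm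
  rw [hZe] at hZ
  rw [show (1 : Matrix (Fin 2) (Fin 2) ℂ) = !![1,0;0,1] from Matrix.one_fin_two] at hZ
  simp only [Matrix.mul_fin_two] at hZ
  have e00 : a * a + b * c = 1 := congrFun (congrFun hZ 0) 0
  have e01 : a * b + b * d = 0 := congrFun (congrFun hZ 0) 1
  have e10 : c * a + d * c = 0 := congrFun (congrFun hZ 1) 0
  have e11 : c * b + d * d = 1 := congrFun (congrFun hZ 1) 1
  by_cases ht : a + d = 0
  · -- trace zero case: diagonalizable with eigenvalues 1, -1
    right; right
    have hda : d = -a := by linear_combination ht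
    by_cases hb0 : b = 0
    · have ha2 : a * a = 1 := by rw [hb0] at e00; linear_combination e00
      have : (a - 1) * (a + 1) = 0 := by ring_nf; linear_combination ha2
      rcases mul_eq_zero.mp this with h1 | h1
      · -- a = 1, d = -1
        have haa : a = 1 := by linear_combination h1
        refine ⟨!![2, 0; c, 1], ?_, ?_⟩
        · simp [Matrix.det_fin_two_of]
        · rw [hZe, hb0, hda, haa]
          simp only [Matrix.mul_fin_two]
          ext i j
          fin_cases i <;> fin_cases j <;> simp
          all_goals ring
      · -- a = -1, d = 1
        have haa : a = -1 := by linear_combination h1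
        refine ⟨!![0, 2; 1, -c], ?_, ?_⟩
        · simp [Matrix.det_fin_two_of]
        · rw [hZe, hb0, hda, haa]
          simp only [Matrix.mul_fin_two]
          ext i j
          fin_cases i <;> fin_cases j <;> simp
          all_goals ring
    · refine ⟨!![b, b; 1 - a, -1 - a], ?_, ?_⟩
      · simp only [Matrix.det_fin_two_of]
        intro h
        apply hb0
        have : b * (-2) = 0 := by linear_combination h
        simpa using this
      · rw [hZe, hda]
        simp only [Matrix.mul_fin_two]
        ext i j
        fin_cases i <;> fin_cases j <;> simp
        · ring
        · ring
        · linear_combination e00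
        · linear_combination e00
  · -- trace nonzero: Z = ±1
    have hbz : b = 0 := by
      have : b * (a + d) = 0 := by linear_combination e01
      exact (mul_eq_zero.mp this).resolve_right ht
    have hcz : c = 0 := by
      have : c * (a + d) = 0 := by linear_combination e10
      exact (mul_eq_zero.mp this).resolve_right ht
    rw [hbz, hcz] at e00 e11
    have ha1 : (a - 1) * (a + 1) = 0 := by ring_nf; linear_combination e00
    have hd1 : (d - 1) * (d + 1) = 0 := by ring_nf; linear_combination e11
    rcases mul_eq_zero.mp ha1 with h1 | h1 <;> rcases mul_eq_zero.mp hd1 with h2 | h2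
    · left
      rw [hZe, hbz, hcz, show a = 1 by linear_combination h1,
        show d = 1 by linear_combination h2, Matrix.one_fin_two]
    · exact absurd (by linear_combination h1 + h2) ht
    · exact absurd (by linear_combination h1 + h2) ht
    · right; left
      rw [hZe, hbz, hcz, show a = -1 by linear_combination h1,
        show d = -1 by linear_combination h2]
      rw [show (-1 : Matrix (Fin 2) (Fin 2) ℂ) = -(!![1,0;0,1]) from by rw [← Matrix.one_fin_two]]
      ext i j; fin_cases i <;> fin_cases j <;> simp

lemma antidiag_of_anticomm (W : Matrix (Fin 2) (Fin 2) ℂ)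
    (h : W * !![1, 0; 0, -1] = -(!![1, 0; 0, -1] * W)) :
    ∃ p q : ℂ, W = !![0, p; q, 0] := by
  refine ⟨W 0 1, W 1 0, ?_⟩
  have hW : W = !![W 0 0, W 0 1; W 1 0, W 1 1] := (Matrix.etaExpand_eq W).symm
  rw [hW] at h
  simp only [Matrix.mul_fin_two, Matrix.neg_of] at h
  have h00 : W 0 0 = 0 := by
    have := congrFun (congrFun h 0) 0
    simp at this
    linear_combination this / 2
  have h11 : W 1 1 = 0 := by
    have := congrFun (congrFun h 1) 1
    simp at this
    linear_combination -this / 2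
  ext i j
  fin_cases i <;> fin_cases j <;> simp [h00, h11]

end aux

section mainaux

lemma rho_sq (ρ : ConifoldAlgebra →ₐ[ℂ] Matrix (Fin 2) (Fin 2) ℂ) :
    ρ (cxi 2) * ρ (cxi 2) = 1 := by
  have h := congrArg ρ (RingQuot.mkAlgHom_rel ℂ ConifoldRel.r5)
  simp only [map_pow, map_one, sq] at h
  simpa [cxi, map_mul] using h

lemma rho_anti1 (ρ : ConifoldAlgebra →ₐ[ℂ] Matrix (Fin 2) (Fin 2) ℂ) :
    ρ (cxi 0) * ρ (cxi 2) = -(ρ (cxi 2) * ρ (cxi 0)) := by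
  have h := congrArg ρ (RingQuot.mkAlgHom_rel ℂ ConifoldRel.r3)
  simpa [cxi, map_mul, map_neg] using h

lemma rho_anti2 (ρ : ConifoldAlgebra →ₐ[ℂ] Matrix (Fin 2) (Fin 2) ℂ) :
    ρ (cxi 1) * ρ (cxi 2) = -(ρ (cxi 2) * ρ (cxi 1)) := by
  have h := congrArg ρ (RingQuot.mkAlgHom_rel ℂ ConifoldRel.r4)
  simpa [cxi, map_mul, map_neg] using h

lemma eq_zero_of_anti_one {X Z : Matrix (Fin 2) (Fin 2) ℂ}
    (h : X * Z = -(Z * X)) (hZ : Z = 1 ∨ Z = -1) : X = 0 := by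
  have hXX : X = -X := by
    rcases hZ with hZ | hZ <;> rw [hZ] at h <;>
      simp only [mul_one, mul_neg_one, one_mul, neg_one_mul, neg_neg] at h <;>
      [exact h; exact neg_eq_iff_eq_neg.mp h]
  have h2 : (2 : ℂ) • X = 0 := by
    rw [two_smul]; nth_rewrite 1 [hXX]; simp
  simpa [smul_eq_zero] using h2

lemma one_ne_diag : (1 : Matrix (Fin 2) (Fin 2) ℂ) ≠ !![1, 0; 0, -1] := by
  intro h
  have h2 := congrFun (congrFun h 1) 1
  rw [Matrix.one_fin_two] at h2
  simp at h2
  exact one_ne_zero (by linear_combination h2 / 2 : (1:ℂ) = 0)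

lemma neg_one_ne_diag : (-1 : Matrix (Fin 2) (Fin 2) ℂ) ≠ !![1, 0; 0, -1] := by
  intro h
  have h2 := congrFun (congrFun h 0) 0
  rw [show (-1 : Matrix (Fin 2) (Fin 2) ℂ) = -(!![1,0;0,1]) from by rw [← Matrix.one_fin_two]] at h2
  simp at h2
  exact one_ne_zero (by linear_combination -h2 / 2 : (1:ℂ) = 0)

lemma one_ne_negone : (1 : Matrix (Fin 2) (Fin 2) ℂ) ≠ -1 := by
  intro h
  have h2 := congrFun (congrFun h 0) 0
  rw [show (-1 : Matrix (Fin 2) (Fin 2) ℂ) = -(!![1,0;0,1]) from by rw [← Matrix.one_fin_two],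
    Matrix.one_fin_two] at h2
  simp at h2
  exact one_ne_zero (by linear_combination h2 / 2 : (1:ℂ) = 0)

end mainaux

/-- Any representation `ρ : Λ_c → M₂(ℂ)` is conjugate, via some `g ∈ GL₂(ℂ)`, to one of
exactly three forms: (1) `ξ₁,ξ₂ ↦ 0`, `ξ₃ ↦ Id`; (2) `ξ₁,ξ₂ ↦ 0`, `ξ₃ ↦ −Id`;
(3) `ξ₃ ↦ diag(1,−1)`, `ξ₁ ↦ [[0,a₁],[b₁,0]]`, `ξ₂ ↦ [[0,a₂],[b₂,0]]`. -/
theorem conifold_algebra_representation_classification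
    (ρ : ConifoldAlgebra →ₐ[ℂ] Matrix (Fin 2) (Fin 2) ℂ) :
    ∃ g : GL (Fin 2) ℂ,
      let c : ConifoldAlgebra → Matrix (Fin 2) (Fin 2) ℂ := fun x =>
        (g : Matrix (Fin 2) (Fin 2) ℂ) * ρ x *
          ((g⁻¹ : GL (Fin 2) ℂ) : Matrix (Fin 2) (Fin 2) ℂ)
      let P₁ : Prop := c (cxi 0) = 0 ∧ c (cxi 1) = 0 ∧ c (cxi 2) = 1
      let P₂ : Prop := c (cxi 0) = 0 ∧ c (cxi 1) = 0 ∧ c (cxi 2) = -1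
      let P₃ : Prop := c (cxi 2) = !![1, 0; 0, -1] ∧
        ∃ a₁ b₁ a₂ b₂ : ℂ, c (cxi 0) = !![0, a₁; b₁, 0] ∧ c (cxi 1) = !![0, a₂; b₂, 0]
      (P₁ ∧ ¬P₂ ∧ ¬P₃) ∨ (¬P₁ ∧ P₂ ∧ ¬P₃) ∨ (¬P₁ ∧ ¬P₂ ∧ P₃) := by
  have hsq := rho_sq ρ
  have ha1 := rho_anti1 ρ
  have ha2 := rho_anti2 ρ
  rcases zmat_cases _ hsq with hZ | hZ | ⟨M, hdet, hM⟩
  · -- Form (1)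
    refine ⟨1, ?_⟩
    intro c P₁ P₂ P₃
    have hc : ∀ x, c x = ρ x := by
      intro x; simp [c]
    have hx0 : c (cxi 0) = 0 := by rw [hc]; exact eq_zero_of_anti_one ha1 (Or.inl hZ)
    have hx1 : c (cxi 1) = 0 := by rw [hc]; exact eq_zero_of_anti_one ha2 (Or.inl hZ)
    have hx2 : c (cxi 2) = 1 := by rw [hc, hZ]
    left
    refine ⟨⟨hx0, hx1, hx2⟩, ?_, ?_⟩
    · rintro ⟨-, -, h⟩; rw [hx2] at h; exact one_ne_negone h
    · rintro ⟨h, -⟩; rw [hx2] at h; exact one_ne_diag h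
  · -- Form (2)
    refine ⟨1, ?_⟩
    intro c P₁ P₂ P₃
    have hc : ∀ x, c x = ρ x := by
      intro x; simp [c]
    have hx0 : c (cxi 0) = 0 := by rw [hc]; exact eq_zero_of_anti_one ha1 (Or.inr hZ)
    have hx1 : c (cxi 1) = 0 := by rw [hc]; exact eq_zero_of_anti_one ha2 (Or.inr hZ)
    have hx2 : c (cxi 2) = -1 := by rw [hc, hZ]
    right; left
    refine ⟨?_, ⟨hx0, hx1, hx2⟩, ?_⟩
    · rintro ⟨-, -, h⟩; rw [hx2] at h; exact one_ne_negone h.symm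
    · rintro ⟨h, -⟩; rw [hx2] at h; exact neg_one_ne_diag h
  · -- Form (3)
    have hMunit : IsUnit M.det := isUnit_iff_ne_zero.mpr hdet
    refine ⟨(Matrix.GeneralLinearGroup.mkOfDetNeZero M hdet)⁻¹, ?_⟩
    intro c P₁ P₂ P₃
    have hginv : ((((Matrix.GeneralLinearGroup.mkOfDetNeZero M hdet)⁻¹)⁻¹ : GL (Fin 2) ℂ) :
        Matrix (Fin 2) (Fin 2) ℂ) = M := by
      rw [inv_inv]; rfl
    have hg : (((Matrix.GeneralLinearGroup.mkOfDetNeZero M hdet)⁻¹ : GL (Fin 2) ℂ) :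
        Matrix (Fin 2) (Fin 2) ℂ) = M⁻¹ := by
      rw [Matrix.coe_units_inv]; rfl
    have hcx : ∀ x, c x = M⁻¹ * ρ x * M := by
      intro x; simp only [c, hginv, hg]
    have hx2 : c (cxi 2) = !![1, 0; 0, -1] := by
      rw [hcx, mul_assoc, hM, ← mul_assoc, Matrix.nonsing_inv_mul M hMunit, one_mul]
    have hanti : ∀ X : Matrix (Fin 2) (Fin 2) ℂ, X * ρ (cxi 2) = -(ρ (cxi 2) * X) →
        (M⁻¹ * X * M) * !![1, 0; 0, -1] = -(!![1, 0; 0, -1] * (M⁻¹ * X * M)) := by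
      intro X hX
      have hD : !![(1:ℂ), 0; 0, -1] = M⁻¹ * ρ (cxi 2) * M := by
        rw [mul_assoc, hM, ← mul_assoc, Matrix.nonsing_inv_mul M hMunit, one_mul]
      rw [hD]
      calc M⁻¹ * X * M * (M⁻¹ * ρ (cxi 2) * M)
          = M⁻¹ * (X * (M * M⁻¹) * ρ (cxi 2)) * M := by noncomm_ring
        _ = M⁻¹ * (X * ρ (cxi 2)) * M := by
            rw [Matrix.mul_nonsing_inv M hMunit, mul_one]
        _ = M⁻¹ * (-(ρ (cxi 2) * X)) * M := by rw [hX]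
        _ = -(M⁻¹ * (ρ (cxi 2) * (M * M⁻¹) * X) * M) := by
            rw [Matrix.mul_nonsing_inv M hMunit]; noncomm_ring
        _ = -(M⁻¹ * ρ (cxi 2) * M * (M⁻¹ * X * M)) := by noncomm_ring
    right; right
    have hx0 := antidiag_of_anticomm _ (hanti _ ha1)
    have hx1 := antidiag_of_anticomm _ (hanti _ ha2)
    refine ⟨?_, ?_, ?_⟩
    · rintro ⟨-, -, h⟩; rw [hx2] at h; exact one_ne_diag h.symm
    · rintro ⟨-, -, h⟩; rw [hx2] at h; exact neg_one_ne_diag h.symm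
    · refine ⟨hx2, ?_⟩
      obtain ⟨p, q, hpq⟩ := hx0
      obtain ⟨r, s, hrs⟩ := hx1
      exact ⟨p, q, r, s, by rw [hcx]; exact hpq, by rw [hcx]; exact hrs⟩
end

section
/- Let Λ_c be the conifold algebra. For every a₁, b₁, a₂, b₂ ∈ ℂ there exists a unique ℂ-algebra homomorphism ρ : Λ_c → M₂(ℂ) with ρ(ξ₁) = [[0,a₁],[b₁,0]], ρ(ξ₂) = [[0,a₂],[b₂,0]], ρ(ξ₃) = diag(1,−1); moreover the composite of ρ with τ^♯ satisfies ρ(τ^♯(z₁)) = a₁b₁·Id, ρ(τ^♯(z₂)) = a₂b₂·Id, ρ(τ^♯(z₃)) = a₁b₂·Id, and ρ(τ^♯(z₄)) = a₂b₁·Id. -/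
/-- For every `a₁,b₁,a₂,b₂ ∈ ℂ` there is a unique representation `ρ : Λ_c → M₂(ℂ)` with
`ρ(ξ₁)=[[0,a₁],[b₁,0]]`, `ρ(ξ₂)=[[0,a₂],[b₂,0]]`, `ρ(ξ₃)=diag(1,−1)`; its composite
with `τ^♯` sends `z₁,z₂,z₃,z₄` to `a₁b₁·Id, a₂b₂·Id, a₁b₂·Id, a₂b₁·Id`. -/
theorem form_three_representations (a₁ b₁ a₂ b₂ : ℂ) :
    (∃! ρ : ConifoldAlgebra →ₐ[ℂ] Matrix (Fin 2) (Fin 2) ℂ,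
      ρ (cxi 0) = !![0, a₁; b₁, 0] ∧ ρ (cxi 1) = !![0, a₂; b₂, 0] ∧
        ρ (cxi 2) = !![1, 0; 0, -1]) ∧
    ∀ ρ : ConifoldAlgebra →ₐ[ℂ] Matrix (Fin 2) (Fin 2) ℂ,
      ρ (cxi 0) = !![0, a₁; b₁, 0] → ρ (cxi 1) = !![0, a₂; b₂, 0] →
      ρ (cxi 2) = !![1, 0; 0, -1] →
        ρ (tauZ 0) = (a₁ * b₁) • (1 : Matrix (Fin 2) (Fin 2) ℂ) ∧
        ρ (tauZ 1) = (a₂ * b₂) • (1 : Matrix (Fin 2) (Fin 2) ℂ) ∧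
        ρ (tauZ 2) = (a₁ * b₂) • (1 : Matrix (Fin 2) (Fin 2) ℂ) ∧
        ρ (tauZ 3) = (a₂ * b₁) • (1 : Matrix (Fin 2) (Fin 2) ℂ) := by
  classical
  set M : Fin 3 → Matrix (Fin 2) (Fin 2) ℂ :=
    ![!![0, a₁; b₁, 0], !![0, a₂; b₂, 0], !![1, 0; 0, -1]] with hM
  have hrel : ∀ ⦃x y : FreeAlgebra ℂ (Fin 3)⦄, ConifoldRel x y →
      (FreeAlgebra.lift ℂ M) x = (FreeAlgebra.lift ℂ M) y := by
    intro x y h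
    cases h <;>
      simp only [map_mul, map_pow, map_one, map_neg, FreeAlgebra.lift_ι_apply, hM] <;>
      · ext i j
        fin_cases i <;> fin_cases j <;>
          simp [Matrix.mul_apply, Fin.sum_univ_two, pow_two] <;> ring
  set ρ₀ : ConifoldAlgebra →ₐ[ℂ] Matrix (Fin 2) (Fin 2) ℂ :=
    RingQuot.liftAlgHom ℂ ⟨FreeAlgebra.lift ℂ M, hrel⟩ with hρ₀
  have hρ₀x : ∀ i, ρ₀ (cxi i) = M i := by
    intro i
    simp [hρ₀, cxi, RingQuot.liftAlgHom_mkAlgHom_apply]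
  have huniq : ∀ ρ : ConifoldAlgebra →ₐ[ℂ] Matrix (Fin 2) (Fin 2) ℂ,
      ρ (cxi 0) = !![0, a₁; b₁, 0] → ρ (cxi 1) = !![0, a₂; b₂, 0] →
      ρ (cxi 2) = !![1, 0; 0, -1] → ρ = ρ₀ := by
    intro ρ h0 h1 h2
    have hgen : ∀ j : Fin 3, ρ (cxi j) = ρ₀ (cxi j) := by
      intro j
      fin_cases j <;> rw [hρ₀x] <;> simp [hM, h0, h1, h2]
    have key : ρ.comp (RingQuot.mkAlgHom ℂ ConifoldRel)
        = ρ₀.comp (RingQuot.mkAlgHom ℂ ConifoldRel) := by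
      apply FreeAlgebra.hom_ext
      funext i
      simpa [cxi] using hgen i
    apply AlgHom.ext
    intro x
    obtain ⟨y, rfl⟩ := RingQuot.mkAlgHom_surjective ℂ ConifoldRel x
    exact congrFun (congrArg DFunLike.coe key) y
  constructor
  · refine ⟨ρ₀, ⟨?_, ?_, ?_⟩, fun ρ ⟨h0, h1, h2⟩ => huniq ρ h0 h1 h2⟩ <;>
      · rw [hρ₀x]; simp [hM]
  · intro ρ h0 h1 h2
    refine ⟨?_, ?_, ?_, ?_⟩
    · show ρ (cxi 0 ^ 2) = _
      rw [map_pow, h0]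
      ext i j
      fin_cases i <;> fin_cases j <;>
        simp [pow_two, Matrix.mul_apply, Fin.sum_univ_two, Matrix.one_apply] <;> ring
    · show ρ (cxi 1 ^ 2) = _
      rw [map_pow, h1]
      ext i j
      fin_cases i <;> fin_cases j <;>
        simp [pow_two, Matrix.mul_apply, Fin.sum_univ_two, Matrix.one_apply] <;> ring
    · show ρ ((1 / 2 : ℂ) • (cxi 0 * cxi 1 + cxi 1 * cxi 0) +
        (1 / 2 : ℂ) • ((cxi 0 * cxi 1 - cxi 1 * cxi 0) * cxi 2)) = _
      simp only [map_add, map_smul, map_mul, map_sub, h0, h1, h2]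
      ext i j
      fin_cases i <;> fin_cases j <;>
        simp [Matrix.mul_apply, Fin.sum_univ_two, Matrix.one_apply] <;> ring
    · show ρ ((1 / 2 : ℂ) • (cxi 0 * cxi 1 + cxi 1 * cxi 0) -
        (1 / 2 : ℂ) • ((cxi 0 * cxi 1 - cxi 1 * cxi 0) * cxi 2)) = _
      simp only [map_add, map_sub, map_smul, map_mul, h0, h1, h2]
      ext i j
      fin_cases i <;> fin_cases j <;>
        simp [Matrix.mul_apply, Fin.sum_univ_two, Matrix.one_apply] <;> ring
end

section
/- Let Λ_c be the conifold algebra. There are exactly two ℂ-algebra homomorphisms ρ : Λ_c → M₂(ℂ) for which ρ(ξ₃) is a scalar multiple of the identity matrix; they are given by ρ(ξ₁) = ρ(ξ₂) = 0 together with ρ(ξ₃) = Id, and ρ(ξ₁) = ρ(ξ₂) = 0 together with ρ(ξ₃) = −Id, respectively. -/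
/-! If `ρ(ξ₃) = c • 1`, the relation `ξ₃² = 1` forces `c = ±1`, and then `ξᵢξ₃ = −ξ₃ξᵢ` reads
`2c • ρ(ξᵢ) = 0`, so `ρ(ξ₁) = ρ(ξ₂) = 0`. Conversely `ξ₁, ξ₂ ↦ 0`, `ξ₃ ↦ e` respects every relation
for any `e` with `e² = 1`. -/

theorem eq_one_or_eq_neg_one_of_smul_one_sq_eq_one {K A : Type*} [Field K] [Ring A]
    [Algebra K A] [Nontrivial A] {c : K} (h : (c • (1 : A)) ^ 2 = 1) : c = 1 ∨ c = -1 := by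
  rw [smul_pow, one_pow, ← Algebra.algebraMap_eq_smul_one, ← map_one (algebraMap K A)] at h
  exact sq_eq_one_iff.mp ((algebraMap K A).injective h)

theorem eq_zero_of_mul_smul_one_eq_neg {K A : Type*} [Field K] [NeZero (2 : K)] [Ring A]
    [Algebra K A] {a : A} {c : K} (hc : c ≠ 0) (h : a * c • (1 : A) = -(c • (1 : A) * a)) :
    a = 0 := by
  rw [mul_smul_one, smul_one_mul, eq_neg_iff_add_eq_zero, ← two_smul K, smul_smul] at h
  exact (smul_eq_zero.mp h).resolve_left (mul_ne_zero two_ne_zero hc)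

namespace ConifoldAlgebra

theorem cxi_mul_cxi_two {i : Fin 3} (hi : i ≠ 2) : cxi i * cxi 2 = -(cxi 2 * cxi i) := by
  fin_cases i
  · simpa [cxi] using RingQuot.mkAlgHom_rel ℂ ConifoldRel.r3
  · simpa [cxi] using RingQuot.mkAlgHom_rel ℂ ConifoldRel.r4
  · exact absurd rfl hi

theorem cxi_two_sq : cxi 2 ^ 2 = 1 := by
  simpa [cxi] using RingQuot.mkAlgHom_rel ℂ ConifoldRel.r5

variable {A : Type*} [Ring A] [Algebra ℂ A]

theorem algHom_ext {f g : ConifoldAlgebra →ₐ[ℂ] A} (h : ∀ i, f (cxi i) = g (cxi i)) : f = g :=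
  RingQuot.ringQuot_ext' ℂ _ _ (FreeAlgebra.hom_ext (funext h))

noncomputable def liftInvolution (e : A) (he : e ^ 2 = 1) : ConifoldAlgebra →ₐ[ℂ] A :=
  RingQuot.liftAlgHom ℂ ⟨FreeAlgebra.lift ℂ ![0, 0, e], by
    intro x y h
    induction h <;> simp [he]⟩

theorem liftInvolution_cxi (e : A) (he : e ^ 2 = 1) (i : Fin 3) :
    liftInvolution e he (cxi i) = ![0, 0, e] i := by
  simp [liftInvolution, cxi]

theorem eq_liftInvolution_iff {ρ : ConifoldAlgebra →ₐ[ℂ] A} {e : A} {he : e ^ 2 = 1} :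
    ρ = liftInvolution e he ↔ ρ (cxi 0) = 0 ∧ ρ (cxi 1) = 0 ∧ ρ (cxi 2) = e := by
  constructor
  · rintro rfl
    exact ⟨liftInvolution_cxi e he 0, liftInvolution_cxi e he 1, liftInvolution_cxi e he 2⟩
  · rintro ⟨h0, h1, h2⟩
    refine algHom_ext fun i ↦ ?_
    fin_cases i <;> simp [liftInvolution_cxi, h0, h1, h2]

theorem map_cxi_eq_zero_of_map_cxi_two_eq_smul_one {ρ : ConifoldAlgebra →ₐ[ℂ] A} {c : ℂ}
    (hc : c ≠ 0) (h : ρ (cxi 2) = c • 1) {i : Fin 3} (hi : i ≠ 2) : ρ (cxi i) = 0 :=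
  eq_zero_of_mul_smul_one_eq_neg hc <| by
    rw [← h, ← map_mul, cxi_mul_cxi_two hi, map_neg, map_mul]

end ConifoldAlgebra

open ConifoldAlgebra in
/-- There are exactly two representations `ρ : Λ_c → M₂(ℂ)` for which `ρ(ξ₃)` is a
scalar matrix: `ξ₁,ξ₂ ↦ 0` with `ξ₃ ↦ Id`, and `ξ₁,ξ₂ ↦ 0` with `ξ₃ ↦ −Id`. -/
theorem point_components_of_representation_variety :
    ∃ ρ₁ ρ₂ : ConifoldAlgebra →ₐ[ℂ] Matrix (Fin 2) (Fin 2) ℂ,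
      ρ₁ ≠ ρ₂ ∧
      (ρ₁ (cxi 0) = 0 ∧ ρ₁ (cxi 1) = 0 ∧ ρ₁ (cxi 2) = 1) ∧
      (ρ₂ (cxi 0) = 0 ∧ ρ₂ (cxi 1) = 0 ∧ ρ₂ (cxi 2) = -1) ∧
      ∀ ρ : ConifoldAlgebra →ₐ[ℂ] Matrix (Fin 2) (Fin 2) ℂ,
        (∃ c : ℂ, ρ (cxi 2) = c • (1 : Matrix (Fin 2) (Fin 2) ℂ)) →
        ρ = ρ₁ ∨ ρ = ρ₂ := by
  have hρ₁ := eq_liftInvolution_iff.mp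
    (rfl : liftInvolution (1 : Matrix (Fin 2) (Fin 2) ℂ) (one_pow 2) = _)
  have hρ₂ := eq_liftInvolution_iff.mp
    (rfl : liftInvolution (-1 : Matrix (Fin 2) (Fin 2) ℂ) neg_one_sq = _)
  refine ⟨_, _, fun h ↦ ?_, hρ₁, hρ₂, ?_⟩
  · have h2 : (1 : Matrix (Fin 2) (Fin 2) ℂ) = -1 := hρ₁.2.2.symm.trans (h ▸ hρ₂.2.2)
    exact absurd (congrFun (congrFun h2 0) 0) (by norm_num)
  rintro ρ ⟨c, hc⟩
  have hc_sq : (c • (1 : Matrix (Fin 2) (Fin 2) ℂ)) ^ 2 = 1 := by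
    rw [← hc, ← map_pow, cxi_two_sq, map_one]
  have hc_sign := eq_one_or_eq_neg_one_of_smul_one_sq_eq_one hc_sq
  have hc₀ : c ≠ 0 := by rcases hc_sign with rfl | rfl <;> norm_num
  have h0 := map_cxi_eq_zero_of_map_cxi_two_eq_smul_one hc₀ hc (i := 0) (by decide)
  have h1 := map_cxi_eq_zero_of_map_cxi_two_eq_smul_one hc₀ hc (i := 1) (by decide)
  rcases hc_sign with rfl | rfl
  · exact .inl (eq_liftInvolution_iff.mpr ⟨h0, h1, by simpa using hc⟩)
  · exact .inr (eq_liftInvolution_iff.mpr ⟨h0, h1, by simpa using hc⟩)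
end
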